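/- Let p be a prime, let f_1, …, f_r ∈ ℤ_p[x_1, …, x_n] be nonzero polynomials, and set g = f_1 y_1 + … + f_r y_r ∈ ℤ_p[x_1, …, x_n, y_1, …, y_r]. Define formal power series Z_g(T) = Σ_{m≥0} μ({(x, v) ∈ ℤ_p^n × ℤ_p^r : v_p(g(x, v)) = m}) T^m and Z_𝔞(T) = Σ_{m≥0} μ({x ∈ ℤ_p^n : min_{1≤i≤r} v_p(f_i(x)) = m}) T^m in ℝ[[T]]. Then (1 − p^{−1} T) · Z_g(T) = (1 − p^{−1}) · Z_𝔞(T) as formal power series with real coefficients. -/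

import Mathlib

open MeasureTheory MvPolynomial
open scoped ENNReal

/-- The Borel σ-algebra on the `p`-adic integers. -/
noncomputable instance (p : ℕ) [Fact p.Prime] : MeasurableSpace ℤ_[p] := borel _

instance (p : ℕ) [Fact p.Prime] : BorelSpace ℤ_[p] := ⟨rfl⟩

/-- The Haar probability measure on `ℤ_[p]` (normalized so that `ℤ_[p]` has measure 1). -/
noncomputable def padicHaar (p : ℕ) [Fact p.Prime] : Measure ℤ_[p] :=
  Measure.addHaarMeasure ⊤

instance (p : ℕ) [Fact p.Prime] : SigmaFinite (padicHaar p) :=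
  Measure.sigmaFinite_addHaarMeasure

/-- The Haar probability measure on `ℤ_[p]^n`, as the product of the Haar probability
measures on the factors. -/
noncomputable def padicPiHaar (p : ℕ) [Fact p.Prime] (n : ℕ) :
    Measure (Fin n → ℤ_[p]) :=
  Measure.pi fun _ => padicHaar p

/-!
Fix `x` and put `c = (f_i(x))_i`. If `‖c‖ = p^{-a}` then `c = p^a d` with some `d_j` a unit, so
`v ↦ d ⬝ᵥ v` is a continuous surjective homomorphism `ℤ_p^r → ℤ_p` and therefore carries Haar
measure to Haar measure: `v_p(g(x, v)) = a + b` with probability `(1 - p⁻¹) p^{-b}`. By Fubini,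
`Z_g(T) = Z_𝔞(T) · (1 - p⁻¹) ∑_b p^{-b} T^b`, and `1 - p⁻¹ T` inverts the geometric series.
-/

theorem PowerSeries.one_sub_C_mul_X_mul_mk_pow {R : Type*} [CommRing R] (q : R) :
    (1 - C q * X) * mk (q ^ ·) = 1 := by
  simpa [rescale_mk, rescale_X, mul_comm] using congrArg (rescale q) (mk_one_mul_one_sub_eq_one R)

theorem MvPolynomial.eval_sum_rename_mul_X {R σ ι : Type*} [CommSemiring R] [Fintype ι]
    (f : ι → MvPolynomial σ R) (x : σ → R) (v : ι → R) :
    eval (Sum.elim x v) (∑ i, rename Sum.inl (f i) * X (Sum.inr i)) =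
      (fun i => eval x (f i)) ⬝ᵥ v := by
  simp [dotProduct, eval_rename, Function.comp_def]

theorem Finset.sup'_univ_norm_eq_pi_norm {ι E : Type*} [Fintype ι] [SeminormedAddGroup E]
    (h : (univ : Finset ι).Nonempty) (c : ι → E) : univ.sup' h (‖c ·‖) = ‖c‖ := by
  obtain ⟨i, hi⟩ := h
  refine le_antisymm (sup'_le _ _ fun i _ => norm_le_pi_norm c i) ?_
  exact (pi_norm_le_iff_of_nonneg ((norm_nonneg (c i)).trans (le_sup' (‖c ·‖) hi))).mpr fun j =>
    le_sup' (‖c ·‖) (mem_univ j)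

theorem zpow_neg_natCast_inj {b : ℝ} (hb : 1 < b) {m n : ℕ} :
    b ^ (-(m : ℤ)) = b ^ (-(n : ℤ)) ↔ m = n := by
  rw [(zpow_right_strictMono₀ hb).injective.eq_iff]
  omega

instance (p : ℕ) [Fact p.Prime] : (padicHaar p).IsAddHaarMeasure := by
  unfold padicHaar; infer_instance

instance (p : ℕ) [Fact p.Prime] : IsProbabilityMeasure (padicHaar p) :=
  ⟨Measure.addHaarMeasure_self (K₀ := ⊤)⟩

instance (p : ℕ) [Fact p.Prime] (n : ℕ) : IsProbabilityMeasure (padicPiHaar p n) := by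
  unfold padicPiHaar; infer_instance

instance (p : ℕ) [Fact p.Prime] (n : ℕ) : (padicPiHaar p n).IsAddHaarMeasure := by
  unfold padicPiHaar; infer_instance

section

variable {p : ℕ} [hp : Fact p.Prime]

open Finset.HasAntidiagonal

theorem PadicInt.index_ker_toZModPow (k : ℕ) :
    (toZModPow k : ℤ_[p] →+* ZMod (p ^ k)).toAddMonoidHom.ker.index = p ^ k := by
  rw [AddSubgroup.index_ker, AddMonoidHom.range_eq_top.mpr (ZMod.ringHom_surjective _),
    AddSubgroup.card_top, Nat.card_zmod]

theorem padicHaar_norm_le_zpow (k : ℕ) :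
    padicHaar p {x | ‖x‖ ≤ (p : ℝ) ^ (-(k : ℤ))} = ((p : ℝ≥0∞) ^ k)⁻¹ := by
  set H := (PadicInt.toZModPow k : ℤ_[p] →+* ZMod (p ^ k)).toAddMonoidHom.ker
  have hH : (H : Set ℤ_[p]) = {x | ‖x‖ ≤ (p : ℝ) ^ (-(k : ℤ))} := by
    ext x
    rw [Set.mem_ofPred_eq, PadicInt.norm_le_pow_iff_mem_span_pow, ← PadicInt.ker_toZModPow]
    rfl
  have hindex := PadicInt.index_ker_toZModPow (p := p) k
  have : H.FiniteIndex := ⟨by rw [hindex]; exact pow_ne_zero _ hp.out.ne_zero⟩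
  have hmeas : MeasurableSet (H : Set ℤ_[p]) :=
    hH ▸ (isClosed_le continuous_norm continuous_const).measurableSet
  have := H.index_mul_measure hmeas (padicHaar p)
  rw [hindex, measure_univ, hH] at this
  exact ENNReal.eq_inv_of_mul_eq_one_left (by simpa [mul_comm] using this)

theorem padicHaar_norm_eq_zpow (k : ℕ) :
    padicHaar p {x | ‖x‖ = (p : ℝ) ^ (-(k : ℤ))} =
      ((p : ℝ≥0∞) ^ k)⁻¹ - ((p : ℝ≥0∞) ^ (k + 1))⁻¹ := by
  have hsphere : {x : ℤ_[p] | ‖x‖ = (p : ℝ) ^ (-(k : ℤ))} =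
      {x | ‖x‖ ≤ (p : ℝ) ^ (-(k : ℤ))} \ {x | ‖x‖ ≤ (p : ℝ) ^ (-((k + 1 : ℕ) : ℤ))} := by
    ext x
    have hnext : -((k + 1 : ℕ) : ℤ) + 1 = -(k : ℤ) := by push_cast; ring
    simp only [Set.mem_sdiff, Set.mem_ofPred_eq, PadicInt.norm_le_pow_iff_norm_lt_pow_add_one x
      (-((k + 1 : ℕ) : ℤ)), hnext, not_lt, le_antisymm_iff]
  have hsub : {x : ℤ_[p] | ‖x‖ ≤ (p : ℝ) ^ (-((k + 1 : ℕ) : ℤ))} ⊆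
      {x | ‖x‖ ≤ (p : ℝ) ^ (-(k : ℤ))} := fun x hx =>
    le_trans hx (zpow_le_zpow_right₀ (mod_cast hp.out.one_le : (1 : ℝ) ≤ p) (by omega))
  rw [hsphere, measure_sdiff hsub (isClosed_le continuous_norm continuous_const).nullMeasurableSet
    (measure_ne_top _ _), padicHaar_norm_le_zpow, padicHaar_norm_le_zpow]

theorem padicHaar_norm_eq_zpow_toReal (k : ℕ) :
    (padicHaar p {x | ‖x‖ = (p : ℝ) ^ (-(k : ℤ))}).toReal = (1 - (p : ℝ)⁻¹) * (p : ℝ)⁻¹ ^ k := by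
  have hp1 : (1 : ℝ≥0∞) ≤ p := mod_cast hp.out.one_le
  rw [padicHaar_norm_eq_zpow, ENNReal.toReal_sub_of_le
      (ENNReal.inv_le_inv.mpr (pow_le_pow_right₀ hp1 (k.le_add_right 1)))
      (by simp [hp.out.ne_zero])]
  simp only [ENNReal.toReal_inv, ENNReal.toReal_pow, ENNReal.toReal_natCast]
  ring

theorem PadicInt.norm_dotProduct_le {ι : Type*} [Fintype ι] (c v : ι → ℤ_[p]) : ‖c ⬝ᵥ v‖ ≤ ‖c‖ :=
  IsUltrametricDist.norm_sum_le_of_forall_le_of_nonneg (norm_nonneg c) fun i _ =>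
    calc ‖c i * v i‖ = ‖c i‖ * ‖v i‖ := norm_mul _ _
      _ ≤ ‖c i‖ := mul_le_of_le_one_right (norm_nonneg _) (PadicInt.norm_le_one _)
      _ ≤ ‖c‖ := norm_le_pi_norm c i

theorem PadicInt.exists_pi_norm_eq_zpow {ι : Type*} [Fintype ι] {c : ι → ℤ_[p]} (hc : c ≠ 0) :
    ∃ a : ℕ, ‖c‖ = (p : ℝ) ^ (-(a : ℤ)) := by
  obtain ⟨i, -⟩ := Function.ne_iff.mp hc
  have : Nonempty ι := ⟨i⟩
  obtain ⟨j, hj : ‖c j‖ = ‖c‖⟩ := (IsGreatest.pi_norm c).1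
  have hcj : c j ≠ 0 := norm_ne_zero_iff.mp (hj ▸ norm_ne_zero_iff.mpr hc)
  exact ⟨(c j).valuation, hj ▸ PadicInt.norm_eq_zpow_neg_valuation hcj⟩

theorem PadicInt.exists_eq_pow_smul_of_pi_norm_eq {ι : Type*} [Fintype ι] {c : ι → ℤ_[p]} {a : ℕ}
    (hc : ‖c‖ = (p : ℝ) ^ (-(a : ℤ))) :
    ∃ d : ι → ℤ_[p], c = (p : ℤ_[p]) ^ a • d ∧ ∃ j, IsUnit (d j) := by
  have hdvd : ∀ i, ∃ d, c i = (p : ℤ_[p]) ^ a * d := fun i =>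
    Ideal.mem_span_singleton'.mp ((norm_le_pow_iff_mem_span_pow _ a).mp (hc ▸ norm_le_pi_norm c i))
      |>.imp fun d hd => by rw [← hd, mul_comm]
  choose d hd using hdvd
  have hpa : (p : ℝ) ^ (-(a : ℤ)) ≠ 0 := (zpow_pos (mod_cast hp.out.pos) _).ne'
  rcases isEmpty_or_nonempty ι with hι | hι
  · exact absurd (hc ▸ by rw [Subsingleton.elim c 0, norm_zero]) hpa
  obtain ⟨j, hj : ‖c j‖ = ‖c‖⟩ := (IsGreatest.pi_norm c).1
  refine ⟨d, funext hd, j, isUnit_iff.mpr ?_⟩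
  rw [hc, hd, norm_mul, norm_p_pow] at hj
  exact (mul_eq_left₀ hpa).mp hj

theorem measurePreserving_dotProduct_of_isUnit {r : ℕ} {d : Fin r → ℤ_[p]} {j : Fin r}
    (hj : IsUnit (d j)) :
    MeasurePreserving (d ⬝ᵥ ·) (padicPiHaar p r) (padicHaar p) := by
  let L : (Fin r → ℤ_[p]) →+ ℤ_[p] := AddMonoidHom.mk' (d ⬝ᵥ ·) (dotProduct_add d)
  have hsurj : Function.Surjective L := fun t =>
    ⟨Pi.single j (hj.unit⁻¹ * t), by simp [L, dotProduct_single, ← mul_assoc]⟩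
  exact L.measurePreserving (continuous_const.dotProduct continuous_id) hsurj (by simp)

theorem padicPiHaar_norm_dotProduct_eq_zpow_add {r : ℕ} {c : Fin r → ℤ_[p]} {a : ℕ}
    (hc : ‖c‖ = (p : ℝ) ^ (-(a : ℤ))) (b : ℕ) :
    padicPiHaar p r {v | ‖c ⬝ᵥ v‖ = (p : ℝ) ^ (-((a + b : ℕ) : ℤ))} =
      padicHaar p {x | ‖x‖ = (p : ℝ) ^ (-(b : ℤ))} := by
  obtain ⟨d, rfl, j, hj⟩ := PadicInt.exists_eq_pow_smul_of_pi_norm_eq hc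
  have hpa : (p : ℝ) ^ (-(a : ℤ)) ≠ 0 := (zpow_pos (mod_cast hp.out.pos) _).ne'
  have hset : {v | ‖((p : ℤ_[p]) ^ a • d) ⬝ᵥ v‖ = (p : ℝ) ^ (-((a + b : ℕ) : ℤ))} =
      (d ⬝ᵥ ·) ⁻¹' {x | ‖x‖ = (p : ℝ) ^ (-(b : ℤ))} := by
    ext v
    rw [Set.mem_ofPred_eq, smul_dotProduct, smul_eq_mul, norm_mul, PadicInt.norm_p_pow,
      Nat.cast_add, neg_add, zpow_add₀ (mod_cast hp.out.ne_zero), mul_right_inj' hpa]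
    rfl
  rw [hset, (measurePreserving_dotProduct_of_isUnit hj).measure_preimage
    (isClosed_eq continuous_norm continuous_const).nullMeasurableSet]

theorem PadicInt.norm_dotProduct_ne_zpow_of_lt {ι : Type*} [Fintype ι] {c : ι → ℤ_[p]} {a m : ℕ}
    (hc : ‖c‖ ≤ (p : ℝ) ^ (-(a : ℤ))) (hm : m < a) (v : ι → ℤ_[p]) :
    ‖c ⬝ᵥ v‖ ≠ (p : ℝ) ^ (-(m : ℤ)) := fun h =>
  (zpow_lt_zpow_right₀ (mod_cast hp.out.one_lt : (1 : ℝ) < p) (by omega)).not_ge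
    (h ▸ (PadicInt.norm_dotProduct_le c v).trans hc)

theorem padicPiHaar_norm_dotProduct_eq_zpow {r : ℕ} (c : Fin r → ℤ_[p]) (m : ℕ) :
    padicPiHaar p r {v | ‖c ⬝ᵥ v‖ = (p : ℝ) ^ (-(m : ℤ))} =
      ∑ ab ∈ antidiagonal m, if ‖c‖ = (p : ℝ) ^ (-(ab.1 : ℤ)) then
        padicHaar p {x | ‖x‖ = (p : ℝ) ^ (-(ab.2 : ℤ))} else 0 := by
  rcases eq_or_ne c 0 with rfl | hc
  · have hne : ∀ k : ℕ, (0 : ℝ) ≠ (p : ℝ) ^ (-(k : ℤ)) :=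
      fun k => (zpow_pos (mod_cast hp.out.pos) _).ne
    rw [Finset.sum_eq_zero fun ab _ => if_neg (norm_zero (E := Fin r → ℤ_[p]) ▸ hne ab.1)]
    simp only [zero_dotProduct, norm_zero, hne, Set.ofPred_false, measure_empty]
  obtain ⟨a, ha⟩ := PadicInt.exists_pi_norm_eq_zpow hc
  simp only [ha, zpow_neg_natCast_inj (mod_cast hp.out.one_lt : (1 : ℝ) < p)]
  rcases le_or_gt a m with ham | ham
  · obtain ⟨b, rfl⟩ := Nat.exists_eq_add_of_le ham
    rw [Finset.sum_eq_single_of_mem (a, b) (mem_antidiagonal.mpr rfl), if_pos rfl,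
      padicPiHaar_norm_dotProduct_eq_zpow_add ha]
    rintro ⟨a', b'⟩ hab hne
    rw [mem_antidiagonal] at hab
    refine if_neg fun h => hne ?_
    simp only at h hab
    subst h
    rw [Nat.add_left_cancel hab]
  · rw [Finset.sum_eq_zero fun ab hab => if_neg (by rw [mem_antidiagonal] at hab; omega)]
    simp only [PadicInt.norm_dotProduct_ne_zpow_of_lt ha.le ham, Set.ofPred_false, measure_empty]

theorem prod_padicPiHaar_norm_dotProduct_eq_zpow {X : Type*} [MeasurableSpace X] (ν : Measure X)
    {r : ℕ} {F : X → Fin r → ℤ_[p]} (hF : Measurable F) (m : ℕ) :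
    (ν.prod (padicPiHaar p r)) {z | ‖F z.1 ⬝ᵥ z.2‖ = (p : ℝ) ^ (-(m : ℤ))} =
      ∑ ab ∈ antidiagonal m, ν {x | ‖F x‖ = (p : ℝ) ^ (-(ab.1 : ℤ))} *
        padicHaar p {x | ‖x‖ = (p : ℝ) ^ (-(ab.2 : ℤ))} := by
  have hlevel : ∀ a : ℕ, MeasurableSet {x | ‖F x‖ = (p : ℝ) ^ (-(a : ℤ))} := fun a =>
    measurableSet_eq_fun hF.norm measurable_const
  have hdot : Measurable fun z : X × (Fin r → ℤ_[p]) => F z.1 ⬝ᵥ z.2 :=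
    (continuous_fst.dotProduct continuous_snd).measurable.comp
      ((hF.comp measurable_fst).prodMk measurable_snd)
  rw [Measure.prod_apply (measurableSet_eq_fun hdot.norm measurable_const)]
  calc ∫⁻ x, padicPiHaar p r {v | ‖F x ⬝ᵥ v‖ = (p : ℝ) ^ (-(m : ℤ))} ∂ν
      = ∫⁻ x, ∑ ab ∈ antidiagonal m, {x | ‖F x‖ = (p : ℝ) ^ (-(ab.1 : ℤ))}.indicator
          (fun _ => padicHaar p {x | ‖x‖ = (p : ℝ) ^ (-(ab.2 : ℤ))}) x ∂ν := by
        simp only [padicPiHaar_norm_dotProduct_eq_zpow, Set.indicator_apply, Set.mem_ofPred_eq]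
    _ = _ := by
        rw [lintegral_finsetSum _ fun ab _ => measurable_const.indicator (hlevel ab.1)]
        simp only [lintegral_indicator_const (hlevel _), mul_comm]


theorem mk_prod_padicPiHaar_norm_dotProduct_eq_mul {X : Type*} [MeasurableSpace X]
    (ν : Measure X) [IsFiniteMeasure ν] {r : ℕ} {F : X → Fin r → ℤ_[p]} (hF : Measurable F) :
    PowerSeries.mk (fun m =>
        ((ν.prod (padicPiHaar p r)) {z | ‖F z.1 ⬝ᵥ z.2‖ = (p : ℝ) ^ (-(m : ℤ))}).toReal) =
      PowerSeries.mk (fun m => (ν {x | ‖F x‖ = (p : ℝ) ^ (-(m : ℤ))}).toReal) *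
        (PowerSeries.C (1 - (p : ℝ)⁻¹) * PowerSeries.mk ((p : ℝ)⁻¹ ^ ·)) := by
  ext m
  rw [PowerSeries.coeff_mk, PowerSeries.coeff_mul, prod_padicPiHaar_norm_dotProduct_eq_zpow ν hF,
    ENNReal.toReal_sum fun _ _ => ENNReal.mul_ne_top (measure_ne_top _ _) (measure_ne_top _ _)]
  simp only [PowerSeries.coeff_mk, PowerSeries.coeff_C_mul, ENNReal.toReal_mul,
    padicHaar_norm_eq_zpow_toReal]

theorem one_sub_C_mul_X_mul_mk_prod_padicPiHaar_norm_dotProduct {X : Type*} [MeasurableSpace X]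
    (ν : Measure X) [IsFiniteMeasure ν] {r : ℕ} {F : X → Fin r → ℤ_[p]} (hF : Measurable F) :
    (1 - PowerSeries.C (p : ℝ)⁻¹ * PowerSeries.X) * PowerSeries.mk (fun m =>
        ((ν.prod (padicPiHaar p r)) {z | ‖F z.1 ⬝ᵥ z.2‖ = (p : ℝ) ^ (-(m : ℤ))}).toReal) =
      PowerSeries.C (1 - (p : ℝ)⁻¹) *
        PowerSeries.mk (fun m => (ν {x | ‖F x‖ = (p : ℝ) ^ (-(m : ℤ))}).toReal) := by
  rw [mk_prod_padicPiHaar_norm_dotProduct_eq_mul ν hF]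
  linear_combination (PowerSeries.C (1 - (p : ℝ)⁻¹) *
    PowerSeries.mk (fun m => (ν {x | ‖F x‖ = (p : ℝ) ^ (-(m : ℤ))}).toReal)) *
      PowerSeries.one_sub_C_mul_X_mul_mk_pow (p : ℝ)⁻¹

end

theorem igusa_power_series_g_vs_ideal_general
    (p : ℕ) [Fact p.Prime] (n r : ℕ) (hr : 1 ≤ r)
    (f : Fin r → MvPolynomial (Fin n) ℤ_[p]) :
    (1 - PowerSeries.C ((p : ℝ))⁻¹ * PowerSeries.X) *
        PowerSeries.mk (fun m =>
          (((padicPiHaar p n).prod (padicPiHaar p r))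
              {z : (Fin n → ℤ_[p]) × (Fin r → ℤ_[p]) |
                ‖eval (Sum.elim z.1 z.2)
                    (∑ i, rename Sum.inl (f i) * X (Sum.inr i))‖
                  = (p : ℝ) ^ (-(m : ℤ))}).toReal) =
      PowerSeries.C (1 - (p : ℝ)⁻¹) *
        PowerSeries.mk (fun m =>
          (padicPiHaar p n
              {x : Fin n → ℤ_[p] |
                (Finset.univ.sup'
                    (Finset.univ_nonempty_iff.mpr (Fin.pos_iff_nonempty.mp hr))
                    fun i => ‖eval x (f i)‖) = (p : ℝ) ^ (-(m : ℤ))}).toReal) := by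
  simp only [eval_sum_rename_mul_X, Finset.sup'_univ_norm_eq_pi_norm]
  exact one_sub_C_mul_X_mul_mk_prod_padicPiHaar_norm_dotProduct (padicPiHaar p n)
    (F := fun x i => eval x (f i)) (continuous_pi fun i => (f i).continuous_eval).measurable

/-- with `g = ∑ f_i y_i`, `Z_g(T) = ∑_m μ{(x,v) : v_p(g(x,v)) = m} T^m` and
`Z_𝔞(T) = ∑_m μ{x : min_i v_p(f_i(x)) = m} T^m` in `ℝ[[T]]`, one has
`(1 - p⁻¹ T) Z_g(T) = (1 - p⁻¹) Z_𝔞(T)`. -/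
theorem igusa_power_series_g_vs_ideal
    (p : ℕ) [Fact p.Prime] (n r : ℕ) (hr : 1 ≤ r)
    (f : Fin r → MvPolynomial (Fin n) ℤ_[p]) (hf : ∀ i, f i ≠ 0) :
    (1 - PowerSeries.C ((p : ℝ))⁻¹ * PowerSeries.X) *
        PowerSeries.mk (fun m =>
          (((padicPiHaar p n).prod (padicPiHaar p r))
              {z : (Fin n → ℤ_[p]) × (Fin r → ℤ_[p]) |
                ‖eval (Sum.elim z.1 z.2)
                    (∑ i, rename Sum.inl (f i) * X (Sum.inr i))‖
                  = (p : ℝ) ^ (-(m : ℤ))}).toReal) =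
      PowerSeries.C (1 - (p : ℝ)⁻¹) *
        PowerSeries.mk (fun m =>
          (padicPiHaar p n
              {x : Fin n → ℤ_[p] |
                (Finset.univ.sup'
                    (Finset.univ_nonempty_iff.mpr (Fin.pos_iff_nonempty.mp hr))
                    fun i => ‖eval x (f i)‖) = (p : ℝ) ^ (-(m : ℤ))}).toReal) :=
  igusa_power_series_g_vs_ideal_general p n r hr f
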